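/- There exists a constant C > 0 such that for every function v : [0,1] → ℝ that is three times continuously differentiable with v(0) = v(1) = 0, one has (∫₀¹ |v'(x)|⁴ dx)^{1/4} ≤ C[ (∫₀¹ |v'''(x)|² dx)^{5/24} · (∫₀¹ |v(x)|² dx)^{7/24} + (∫₀¹ |v(x)|² dx)^{1/2} ]. -/

import Mathlib

/-!
Write `aₖ = ∫₀¹ (v⁽ᵏ⁾)²` and `Q = ∫₀¹ v'⁴`. Since `v` vanishes at both endpoints, integration by
parts gives `a₁ = -∫ v v''`, so `a₁² ≤ a₀ a₂`, and `Q = -3 ∫ v v'² v''`, which together with the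
Agmon bound `v² ≤ 2 ∫ |v v'|` gives `Q² ≤ 324 a₀ a₁ a₂²`; hence `Q⁴ ≤ 324² a₀³ a₂⁵`.
The derivative `v'` satisfies no boundary condition, so `a₂` is controlled locally instead: on an
interval of length `d`, the mean value theorem between points where `|v'|` is small bounds `v''`
pointwise, and summing over `n` intervals of length `1/n` gives `a₂ ≤ 648 n² a₁ + 2 a₃ / n²`.
Absorbing `a₁` by `a₁² ≤ a₀ a₂` and taking `n ≈ ((a₀ + a₃) / a₀)^{1/6}` yields
`a₂³ ≲ a₀ (a₀ + a₃)²`, so `Q¹² ≲ a₀¹⁴ (a₀ + a₃)¹⁰`, and the theorem follows by taking 48th roots.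
-/

open Set MeasureTheory intervalIntegral

theorem sq_integral_mul_le_integral_sq_mul_integral_sq {f g : ℝ → ℝ} {a b : ℝ} (hab : a ≤ b)
    (hf : Continuous f) (hg : Continuous g) :
    (∫ x in a..b, f x * g x) ^ 2 ≤ (∫ x in a..b, f x ^ 2) * ∫ x in a..b, g x ^ 2 := by
  have hquad : ∀ t : ℝ, 0 ≤ (∫ x in a..b, f x ^ 2) * (t * t)
      + 2 * (∫ x in a..b, f x * g x) * t + ∫ x in a..b, g x ^ 2 := by
    intro t
    have hexpand : ∫ x in a..b, (t * f x + g x) ^ 2 = (∫ x in a..b, f x ^ 2) * (t * t)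
        + 2 * (∫ x in a..b, f x * g x) * t + ∫ x in a..b, g x ^ 2 := by
      have hsq : ∀ x, (t * f x + g x) ^ 2 = t * t * f x ^ 2 + 2 * t * (f x * g x) + g x ^ 2 :=
        fun x => by ring
      simp_rw [hsq]
      rw [intervalIntegral.integral_add, intervalIntegral.integral_add,
        intervalIntegral.integral_const_mul,
        intervalIntegral.integral_const_mul]
      · ring
      all_goals exact (by fun_prop : Continuous _).intervalIntegrable _ _
    exact hexpand ▸ integral_nonneg hab fun x _ => sq_nonneg _
  have := discrim_le_zero hquad
  rw [discrim] at this
  nlinarith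

theorem sq_le_two_mul_integral_abs_mul_deriv {v : ℝ → ℝ} (hv : ContDiff ℝ 1 v) {a b x : ℝ}
    (ha : v a = 0) (hx : x ∈ Icc a b) :
    v x ^ 2 ≤ 2 * ∫ t in a..b, |v t * deriv v t| := by
  have hv' : Continuous (deriv v) := hv.continuous_deriv le_rfl
  have hv0 : Continuous v := hv.continuous
  have hderiv : ∀ t, HasDerivAt (fun t => v t ^ 2) (2 * v t * deriv v t) t := fun t => by
    simpa using (hv.differentiable one_ne_zero t).hasDerivAt.fun_pow 2
  calc v x ^ 2 = ∫ t in a..x, 2 * v t * deriv v t := by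
        rw [integral_eq_sub_of_hasDerivAt (fun t _ => hderiv t)
          ((by fun_prop : Continuous _).intervalIntegrable _ _), ha]
        ring
    _ ≤ ∫ t in a..x, 2 * |v t * deriv v t| := by
        refine integral_mono_on hx.1 ((by fun_prop : Continuous _).intervalIntegrable _ _)
          ((by fun_prop : Continuous _).intervalIntegrable _ _) fun t _ => ?_
        rw [mul_assoc]
        exact mul_le_mul_of_nonneg_left (le_abs_self _) zero_le_two
    _ ≤ ∫ t in a..b, 2 * |v t * deriv v t| :=
        integral_mono_interval le_rfl hx.1 hx.2 (.of_forall fun t => by positivity)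
          ((by fun_prop : Continuous _).intervalIntegrable _ _)
    _ = 2 * ∫ t in a..b, |v t * deriv v t| := integral_const_mul _ _

theorem integral_deriv_sq_eq_neg_integral_mul_deriv_deriv {v : ℝ → ℝ} (hv : ContDiff ℝ 2 v)
    {a b : ℝ} (ha : v a = 0) (hb : v b = 0) :
    ∫ x in a..b, deriv v x ^ 2 = -∫ x in a..b, v x * deriv (deriv v) x := by
  have hv1 : ContDiff ℝ 1 (deriv v) := hv.deriv'
  rw [integral_mul_deriv_eq_deriv_mul
    (fun x _ => (hv.differentiable two_ne_zero x).hasDerivAt)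
    (fun x _ => (hv1.differentiable one_ne_zero x).hasDerivAt)
    ((hv.continuous_deriv (by norm_num)).intervalIntegrable _ _)
    ((hv1.continuous_deriv le_rfl).intervalIntegrable _ _), ha, hb]
  simp [sq]

theorem sq_integral_deriv_sq_le {v : ℝ → ℝ} (hv : ContDiff ℝ 2 v) {a b : ℝ} (hab : a ≤ b)
    (ha : v a = 0) (hb : v b = 0) :
    (∫ x in a..b, deriv v x ^ 2) ^ 2
      ≤ (∫ x in a..b, v x ^ 2) * ∫ x in a..b, deriv (deriv v) x ^ 2 := by
  rw [integral_deriv_sq_eq_neg_integral_mul_deriv_deriv hv ha hb, neg_sq]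
  exact sq_integral_mul_le_integral_sq_mul_integral_sq hab hv.continuous
    ((hv.deriv' (n := 1)).continuous_deriv le_rfl)

theorem integral_deriv_pow_four_le {v : ℝ → ℝ} (hv : ContDiff ℝ 2 v) {a b s : ℝ} (hab : a ≤ b)
    (ha : v a = 0) (hb : v b = 0) (hs : ∀ x ∈ Icc a b, v x ^ 2 ≤ s) :
    ∫ x in a..b, deriv v x ^ 4 ≤ 9 * s * ∫ x in a..b, deriv (deriv v) x ^ 2 := by
  have hv1 : ContDiff ℝ 1 (deriv v) := hv.deriv'
  have hc0 : Continuous v := hv.continuous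
  have hc1 : Continuous (deriv v) := hv1.continuous
  have hc2 : Continuous (deriv (deriv v)) := hv1.continuous_deriv le_rfl
  set Q := ∫ x in a..b, deriv v x ^ 4
  set A := ∫ x in a..b, deriv (deriv v) x ^ 2
  have hparts : Q = -3 * ∫ x in a..b, v x * deriv v x ^ 2 * deriv (deriv v) x := by
    have h := integral_mul_deriv_eq_deriv_mul (a := a) (b := b) (u := v)
      (v := fun x => deriv v x ^ 3) (v' := fun x => 3 * deriv v x ^ 2 * deriv (deriv v) x)
      (fun x _ => (hv.differentiable two_ne_zero x).hasDerivAt)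
      (fun x _ => by simpa using (hv1.differentiable one_ne_zero x).hasDerivAt.fun_pow 3)
      (hc1.intervalIntegrable _ _) ((by fun_prop : Continuous _).intervalIntegrable _ _)
    have hleft : ∫ x in a..b, v x * (3 * deriv v x ^ 2 * deriv (deriv v) x)
        = 3 * ∫ x in a..b, v x * deriv v x ^ 2 * deriv (deriv v) x := by
      rw [← intervalIntegral.integral_const_mul]
      congr 1 with x
      ring
    have hright : ∫ x in a..b, deriv v x * deriv v x ^ 3 = Q := by
      congr 1 with x
      ring
    rw [ha, hb, hleft, hright] at h
    linarith
  have hQ0 : 0 ≤ Q := integral_nonneg hab fun x _ => by positivity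
  have hA0 : 0 ≤ A := integral_nonneg hab fun x _ => by positivity
  have hs0 : 0 ≤ s := (sq_nonneg _).trans (hs a ⟨le_rfl, hab⟩)
  have hweight : ∫ x in a..b, (v x * deriv v x ^ 2) ^ 2 ≤ s * Q := by
    rw [← intervalIntegral.integral_const_mul]
    refine integral_mono_on hab ((by fun_prop : Continuous _).intervalIntegrable _ _)
      ((by fun_prop : Continuous _).intervalIntegrable _ _) fun x hx => ?_
    rw [mul_pow, ← pow_mul]
    exact mul_le_mul_of_nonneg_right (hs x hx) ((even_two_mul 2).pow_nonneg _)
  have hsq : Q ^ 2 ≤ 9 * (s * Q) * A := by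
    calc Q ^ 2 = 9 * (∫ x in a..b, v x * deriv v x ^ 2 * deriv (deriv v) x) ^ 2 := by
          rw [hparts]; ring
      _ ≤ 9 * ((∫ x in a..b, (v x * deriv v x ^ 2) ^ 2) * A) := by
          gcongr
          exact sq_integral_mul_le_integral_sq_mul_integral_sq hab (by fun_prop) hc2
      _ ≤ 9 * (s * Q) * A := by rw [← mul_assoc]; gcongr
  nlinarith [mul_nonneg hs0 hA0]

theorem sq_integral_deriv_pow_four_le {v : ℝ → ℝ} (hv : ContDiff ℝ 2 v) {a b : ℝ} (hab : a ≤ b)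
    (ha : v a = 0) (hb : v b = 0) :
    (∫ x in a..b, deriv v x ^ 4) ^ 2 ≤ 324 * (∫ x in a..b, v x ^ 2)
      * (∫ x in a..b, deriv v x ^ 2) * (∫ x in a..b, deriv (deriv v) x ^ 2) ^ 2 := by
  set s := 2 * ∫ t in a..b, |v t * deriv v t|
  have hs : s ^ 2 ≤ 4 * ((∫ x in a..b, v x ^ 2) * ∫ x in a..b, deriv v x ^ 2) := by
    have hcs := sq_integral_mul_le_integral_sq_mul_integral_sq hab hv.continuous.abs
      (hv.continuous_deriv one_le_two).abs
    simp only [sq_abs, ← abs_mul] at hcs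
    calc s ^ 2 = 4 * (∫ t in a..b, |v t * deriv v t|) ^ 2 := by ring
      _ ≤ _ := by gcongr
  have hQ := integral_deriv_pow_four_le hv hab ha hb fun x hx =>
    sq_le_two_mul_integral_abs_mul_deriv (hv.of_le one_le_two) ha hx
  have hQ0 : 0 ≤ ∫ x in a..b, deriv v x ^ 4 := integral_nonneg hab fun x _ => by positivity
  calc (∫ x in a..b, deriv v x ^ 4) ^ 2
      ≤ (9 * s * ∫ x in a..b, deriv (deriv v) x ^ 2) ^ 2 := pow_le_pow_left₀ hQ0 hQ 2
    _ = 81 * s ^ 2 * (∫ x in a..b, deriv (deriv v) x ^ 2) ^ 2 := by ring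
    _ ≤ _ := by
      grw [hs]
      linarith

theorem sq_integral_abs_le_mul_integral_sq {f : ℝ → ℝ} (hf : Continuous f) {a b : ℝ} (hab : a ≤ b) :
    (∫ x in a..b, |f x|) ^ 2 ≤ (b - a) * ∫ x in a..b, f x ^ 2 := by
  have h := sq_integral_mul_le_integral_sq_mul_integral_sq hab hf.abs continuous_const
    (g := fun _ => 1)
  simp only [mul_one, sq_abs, one_pow, intervalIntegral.integral_const, smul_eq_mul] at h
  linarith

theorem exists_abs_mul_le_integral_abs {f : ℝ → ℝ} (hf : Continuous f) {a b u w : ℝ}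
    (hau : a ≤ u) (huw : u ≤ w) (hwb : w ≤ b) :
    ∃ c ∈ Icc u w, |f c| * (w - u) ≤ ∫ x in a..b, |f x| := by
  obtain ⟨c, hc, hmin⟩ :=
    isCompact_Icc.exists_isMinOn (nonempty_Icc.2 huw) hf.abs.continuousOn
  refine ⟨c, hc, ?_⟩
  calc |f c| * (w - u) = ∫ _ in u..w, |f c| := by simp [mul_comm]
    _ ≤ ∫ x in u..w, |f x| :=
      integral_mono_on huw intervalIntegrable_const (hf.abs.intervalIntegrable _ _)
        fun x hx => hmin hx
    _ ≤ ∫ x in a..b, |f x| :=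
      integral_mono_interval hau huw hwb (.of_forall fun _ => abs_nonneg _)
        (hf.abs.intervalIntegrable _ _)

theorem exists_abs_deriv_mul_sq_le {f : ℝ → ℝ} (hf : ContDiff ℝ 1 f) {a b : ℝ} (hab : a < b) :
    ∃ c ∈ Icc a b, |deriv f c| * (b - a) ^ 2 ≤ 18 * ∫ x in a..b, |f x| := by
  set h := b - a with hh
  obtain ⟨p, hp, hpJ⟩ := exists_abs_mul_le_integral_abs hf.continuous le_rfl
    (show a ≤ a + h / 3 by linarith) (show a + h / 3 ≤ b by linarith)
  obtain ⟨q, hq, hqJ⟩ := exists_abs_mul_le_integral_abs hf.continuous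
    (show a ≤ b - h / 3 by linarith) (show b - h / 3 ≤ b by linarith) le_rfl
  rw [add_sub_cancel_left] at hpJ
  rw [sub_sub_cancel] at hqJ
  have hpq : h / 3 ≤ q - p := by linarith [hp.2, hq.1]
  obtain ⟨c, hc, hslope⟩ := exists_deriv_eq_slope f (by linarith : p < q)
    hf.continuous.continuousOn fun x _ => (hf.differentiable one_ne_zero x).differentiableWithinAt
  refine ⟨c, ⟨by linarith [hc.1, hp.1], by linarith [hc.2, hq.2]⟩, ?_⟩
  have hmvt : |deriv f c| * (q - p) ≤ |f q| + |f p| := by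
    rw [hslope, abs_div, abs_of_pos (by linarith : 0 < q - p), div_mul_cancel₀ _ (by linarith)]
    exact abs_sub _ _
  calc |deriv f c| * h ^ 2 = 3 * h * (|deriv f c| * (h / 3)) := by ring
    _ ≤ 3 * h * (|deriv f c| * (q - p)) := by gcongr
    _ ≤ 3 * h * (|f q| + |f p|) := by gcongr
    _ = 9 * (|f q| * (h / 3) + |f p| * (h / 3)) := by ring
    _ ≤ 18 * ∫ x in a..b, |f x| := by linarith

theorem abs_le_abs_add_integral_abs_deriv {f : ℝ → ℝ} (hf : ContDiff ℝ 1 f) {a b c x : ℝ}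
    (hc : c ∈ Icc a b) (hx : x ∈ Icc a b) :
    |f x| ≤ |f c| + ∫ t in a..b, |deriv f t| := by
  have hf' : Continuous (deriv f) := hf.continuous_deriv le_rfl
  have hftc : ∫ t in c..x, deriv f t = f x - f c :=
    integral_eq_sub_of_hasDerivAt (fun t _ => (hf.differentiable one_ne_zero t).hasDerivAt)
      (hf'.intervalIntegrable _ _)
  have hsub : uIoc c x ⊆ uIoc a b := uIoc_subset_uIoc_of_uIcc_subset_uIcc
    (uIcc_subset_uIcc (Icc_subset_uIcc hc) (Icc_subset_uIcc hx))
  calc |f x| = |f c + ∫ t in c..x, deriv f t| := by rw [hftc, add_sub_cancel]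
    _ ≤ |f c| + |∫ t in c..x, deriv f t| := abs_add_le _ _
    _ ≤ |f c| + |(∫ t in c..x, |deriv f t|)| := by
      refine add_le_add le_rfl ?_
      simpa only [Real.norm_eq_abs] using
        norm_integral_le_abs_integral_norm (f := deriv f) (μ := volume)
    _ ≤ |f c| + |(∫ t in a..b, |deriv f t|)| := by
      gcongr 1
      exact abs_integral_mono_interval hsub (.of_forall fun _ => abs_nonneg _)
        (hf'.abs.intervalIntegrable _ _)
    _ = |f c| + ∫ t in a..b, |deriv f t| := by
      rw [abs_of_nonneg (integral_nonneg (hc.1.trans hc.2) fun _ _ => abs_nonneg _)]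

theorem integral_deriv_sq_le {f : ℝ → ℝ} (hf : ContDiff ℝ 2 f) {a b : ℝ} (hab : a < b) :
    ∫ x in a..b, deriv f x ^ 2 ≤ 648 / (b - a) ^ 2 * (∫ x in a..b, f x ^ 2)
      + 2 * (b - a) ^ 2 * ∫ x in a..b, deriv (deriv f) x ^ 2 := by
  have hf1 : ContDiff ℝ 1 (deriv f) := hf.deriv'
  set h := b - a
  have hh0 : 0 < h := sub_pos.2 hab
  set J := ∫ x in a..b, |f x|
  set K := ∫ x in a..b, |deriv (deriv f) x|
  obtain ⟨c, hc, hcJ⟩ := exists_abs_deriv_mul_sq_le (hf.of_le one_le_two) hab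
  have hpoint : ∀ x ∈ Icc a b, deriv f x ^ 2 ≤ 2 * ((18 * J / h ^ 2) ^ 2 + K ^ 2) := by
    intro x hx
    have hc' : |deriv f c| ≤ 18 * J / h ^ 2 := by rwa [le_div_iff₀ (by positivity)]
    have hx' : |deriv f x| ≤ 18 * J / h ^ 2 + K := by
      linarith [abs_le_abs_add_integral_abs_deriv hf1 hc hx]
    calc deriv f x ^ 2 = |deriv f x| ^ 2 := (sq_abs _).symm
      _ ≤ (18 * J / h ^ 2 + K) ^ 2 := pow_le_pow_left₀ (abs_nonneg _) hx' 2
      _ ≤ _ := add_sq_le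
  have hint : ∫ x in a..b, deriv f x ^ 2 ≤ h * (2 * ((18 * J / h ^ 2) ^ 2 + K ^ 2)) := by
    have hmono := integral_mono_on hab.le ((hf1.continuous.pow 2).intervalIntegrable _ _)
      (intervalIntegrable_const (μ := volume)) hpoint
    rwa [intervalIntegral.integral_const, smul_eq_mul] at hmono
  have hJ := sq_integral_abs_le_mul_integral_sq hf.continuous hab.le
  have hK := sq_integral_abs_le_mul_integral_sq (hf1.continuous_deriv le_rfl) hab.le
  calc ∫ x in a..b, deriv f x ^ 2 ≤ h * (2 * ((18 * J / h ^ 2) ^ 2 + K ^ 2)) := hint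
    _ = 648 / h ^ 3 * J ^ 2 + 2 * h * K ^ 2 := by field_simp; ring
    _ ≤ 648 / h ^ 3 * (h * ∫ x in a..b, f x ^ 2)
        + 2 * h * (h * ∫ x in a..b, deriv (deriv f) x ^ 2) := by gcongr
    _ = _ := by field_simp

theorem integral_deriv_sq_le_of_subdivision {f : ℝ → ℝ} (hf : ContDiff ℝ 2 f) {a d : ℝ}
    (hd : 0 < d) (n : ℕ) :
    ∫ x in a..a + n * d, deriv f x ^ 2 ≤ 648 / d ^ 2 * (∫ x in a..a + n * d, f x ^ 2)
      + 2 * d ^ 2 * ∫ x in a..a + n * d, deriv (deriv f) x ^ 2 := by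
  have hsum : ∀ g : ℝ → ℝ, Continuous g →
      ∑ k ∈ Finset.range n, ∫ x in a + k * d..a + (k + 1) * d, g x
        = ∫ x in a..a + n * d, g x := fun g hg => by
    simpa using sum_integral_adjacent_intervals (a := fun k : ℕ => a + k * d)
      fun k _ => hg.intervalIntegrable _ _
  have hf1 : ContDiff ℝ 1 (deriv f) := hf.deriv'
  rw [← hsum (fun x => deriv f x ^ 2) (by fun_prop), ← hsum (fun x => f x ^ 2) (by fun_prop),
    ← hsum (fun x => deriv (deriv f) x ^ 2) ((hf1.continuous_deriv le_rfl).pow 2),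
    Finset.mul_sum, Finset.mul_sum, ← Finset.sum_add_distrib]
  refine Finset.sum_le_sum fun k _ => ?_
  have hk := integral_deriv_sq_le hf (show a + k * d < a + (k + 1) * d by linarith)
  rwa [show a + (k + 1) * d - (a + k * d) = d by ring] at hk

theorem pow_three_le_of_forall_nat_le {X Y Z K : ℝ} (hX : 0 ≤ X) (hY : 0 < Y) (hZ : 0 ≤ Z)
    (hK : 0 ≤ K) (h : ∀ n : ℕ, 0 < n → X ≤ K * (n ^ 4 * Y + Z / n ^ 2)) :
    X ^ 3 ≤ (17 * K) ^ 3 * Y * (Y + Z) ^ 2 := by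
  set ε := ((Y + Z) / Y) ^ ((6 : ℕ)⁻¹ : ℝ)
  have hε6 : ε ^ 6 * Y = Y + Z := by
    rw [Real.rpow_inv_natCast_pow (by positivity) (by norm_num)]
    field_simp
  have hε1 : 1 ≤ ε := Real.one_le_rpow (by rw [le_div_iff₀ hY]; linarith) (by positivity)
  have hn : ε ≤ ⌈ε⌉₊ := Nat.le_ceil ε
  have hn' : (⌈ε⌉₊ : ℝ) ≤ 2 * ε := by linarith [Nat.ceil_lt_add_one (by positivity : 0 ≤ ε)]
  have hZn : Z / (⌈ε⌉₊ : ℝ) ^ 2 ≤ ε ^ 4 * Y := by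
    calc Z / (⌈ε⌉₊ : ℝ) ^ 2 ≤ Z / ε ^ 2 := by gcongr
      _ ≤ ε ^ 4 * Y := by
        rw [div_le_iff₀ (by positivity)]
        linarith
  have hX' : X ≤ 17 * K * (ε ^ 4 * Y) :=
    calc X ≤ K * ((⌈ε⌉₊ : ℝ) ^ 4 * Y + Z / (⌈ε⌉₊ : ℝ) ^ 2) := h _ (Nat.ceil_pos.2 (by linarith))
      _ ≤ K * ((2 * ε) ^ 4 * Y + ε ^ 4 * Y) := by gcongr
      _ = 17 * K * (ε ^ 4 * Y) := by ring
  calc X ^ 3 ≤ (17 * K * (ε ^ 4 * Y)) ^ 3 := pow_le_pow_left₀ hX hX' 3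
    _ = (17 * K) ^ 3 * Y * (ε ^ 6 * Y) ^ 2 := by ring
    _ = (17 * K) ^ 3 * Y * (Y + Z) ^ 2 := by rw [hε6]

theorem pow_twelve_le_of_interpolation {a₀ a₁ a₂ a₃ Q : ℝ} (h₀ : 0 ≤ a₀) (h₂ : 0 ≤ a₂)
    (h₃ : 0 ≤ a₃) (hQa : Q ^ 2 ≤ 324 * a₀ * a₁ * a₂ ^ 2)
    (ha₁ : a₁ ^ 2 ≤ a₀ * a₂) (ha₂ : ∀ n : ℕ, 0 < n → a₂ ≤ 648 * n ^ 2 * a₁ + 2 / n ^ 2 * a₃) :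
    Q ^ 12 ≤ 324 ^ 6 * (17 * 648 ^ 2) ^ 15 * a₀ ^ 14 * (a₀ + a₃) ^ 10 := by
  have hQ4 : Q ^ 4 ≤ 324 ^ 2 * a₀ ^ 3 * a₂ ^ 5 :=
    calc Q ^ 4 = (Q ^ 2) ^ 2 := by ring
      _ ≤ (324 * a₀ * a₁ * a₂ ^ 2) ^ 2 := pow_le_pow_left₀ (by positivity) hQa 2
      _ = 324 ^ 2 * a₀ ^ 2 * a₂ ^ 4 * a₁ ^ 2 := by ring
      _ ≤ 324 ^ 2 * a₀ ^ 2 * a₂ ^ 4 * (a₀ * a₂) := by gcongr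
      _ = 324 ^ 2 * a₀ ^ 3 * a₂ ^ 5 := by ring
  have hmid : a₀ ^ 9 * (a₂ ^ 3) ^ 5 ≤ a₀ ^ 9 * ((17 * 648 ^ 2) ^ 3 * a₀ * (a₀ + a₃) ^ 2) ^ 5 := by
    rcases h₀.eq_or_lt with rfl | h₀
    · simp
    gcongr
    refine pow_three_le_of_forall_nat_le h₂ h₀ h₃ (by norm_num) fun n hn => ?_
    have hn : (0 : ℝ) < n := Nat.cast_pos.2 hn
    -- AM-GM against `a₁ ^ 2 ≤ a₀ * a₂` absorbs the `a₁` term into the left-hand side.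
    have habsorb : 648 * n ^ 2 * a₁ ≤ (a₂ + 648 ^ 2 * (n ^ 4 * a₀)) / 2 := by
      refine le_of_pow_le_pow_left₀ two_ne_zero (by positivity) ?_
      calc (648 * n ^ 2 * a₁) ^ 2 = (648 * n ^ 2) ^ 2 * a₁ ^ 2 := by ring
        _ ≤ (648 * n ^ 2) ^ 2 * (a₀ * a₂) := by gcongr
        _ ≤ ((a₂ + 648 ^ 2 * (n ^ 4 * a₀)) / 2) ^ 2 := by
          nlinarith [sq_nonneg (a₂ - 648 ^ 2 * (n ^ 4 * a₀))]
    have ha₃ : 0 ≤ a₃ / n ^ 2 := by positivity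
    have := ha₂ n (Nat.cast_pos.1 hn)
    rw [div_mul_eq_mul_div, mul_div_assoc] at this
    linarith
  calc Q ^ 12 = (Q ^ 4) ^ 3 := by ring
    _ ≤ (324 ^ 2 * a₀ ^ 3 * a₂ ^ 5) ^ 3 := pow_le_pow_left₀ (by positivity) hQ4 3
    _ = 324 ^ 6 * (a₀ ^ 9 * (a₂ ^ 3) ^ 5) := by ring
    _ ≤ 324 ^ 6 * (a₀ ^ 9 * ((17 * 648 ^ 2) ^ 3 * a₀ * (a₀ + a₃) ^ 2) ^ 5) := by gcongr
    _ = _ := by ring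

theorem rpow_quarter_le_of_pow_twelve_le {Q a₀ a₃ K : ℝ} (hQ : 0 ≤ Q) (h₀ : 0 ≤ a₀)
    (h₃ : 0 ≤ a₃) (hK : 0 ≤ K) (h : Q ^ 12 ≤ K * a₀ ^ 14 * (a₀ + a₃) ^ 10) :
    Q ^ ((1 : ℝ) / 4)
      ≤ K ^ ((1 : ℝ) / 48) * (a₃ ^ ((5 : ℝ) / 24) * a₀ ^ ((7 : ℝ) / 24) + a₀ ^ ((1 : ℝ) / 2)) := by
  have hpow : ∀ x : ℝ, 0 ≤ x → ∀ n : ℕ, (x ^ n) ^ ((1 : ℝ) / 48) = x ^ ((n : ℝ) / 48) := by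
    intro x hx n
    rw [← Real.rpow_natCast, ← Real.rpow_mul hx]
    ring_nf
  calc Q ^ ((1 : ℝ) / 4) = (Q ^ 12) ^ ((1 : ℝ) / 48) := by rw [hpow Q hQ]; norm_num
    _ ≤ (K * a₀ ^ 14 * (a₀ + a₃) ^ 10) ^ ((1 : ℝ) / 48) :=
      Real.rpow_le_rpow (by positivity) h (by norm_num)
    _ = K ^ ((1 : ℝ) / 48) * a₀ ^ ((7 : ℝ) / 24) * (a₀ + a₃) ^ ((5 : ℝ) / 24) := by
      rw [Real.mul_rpow (by positivity) (by positivity), Real.mul_rpow hK (by positivity),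
        hpow a₀ h₀, hpow _ (by positivity)]
      norm_num
    _ ≤ K ^ ((1 : ℝ) / 48) * a₀ ^ ((7 : ℝ) / 24) * (a₀ ^ ((5 : ℝ) / 24) + a₃ ^ ((5 : ℝ) / 24)) := by
      gcongr
      exact Real.rpow_add_le_add_rpow h₀ h₃ (by norm_num) (by norm_num)
    _ = _ := by
      rw [mul_add, mul_assoc, ← Real.rpow_add' h₀ (by norm_num)]
      norm_num
      ring

/-- the Gagliardo–Nirenberg interpolation inequality
`‖v'‖_{L⁴(0,1)} ≤ C(‖v'''‖_{L²(0,1)}^{5/12} ‖v‖_{L²(0,1)}^{7/12} + ‖v‖_{L²(0,1)})`,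
with a universal constant `C`, for `C³` functions vanishing at the endpoints. -/
theorem gagliardo_nirenberg_L4_deriv :
    ∃ C : ℝ, 0 < C ∧ ∀ v : ℝ → ℝ, ContDiff ℝ 3 v → v 0 = 0 → v 1 = 0 →
      (∫ x in (0:ℝ)..1, |deriv v x| ^ 4) ^ ((1:ℝ)/4)
        ≤ C * ((∫ x in (0:ℝ)..1, |iteratedDeriv 3 v x| ^ 2) ^ ((5:ℝ)/24)
                 * (∫ x in (0:ℝ)..1, |v x| ^ 2) ^ ((7:ℝ)/24)
               + (∫ x in (0:ℝ)..1, |v x| ^ 2) ^ ((1:ℝ)/2)) := by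
  refine ⟨(324 ^ 6 * (17 * 648 ^ 2) ^ 15) ^ ((1 : ℝ) / 48), by positivity,
    fun v hv hv₀ hv₁ => ?_⟩
  have hv₂ : ContDiff ℝ 2 v := hv.of_le (by norm_num)
  have hv' : ContDiff ℝ 2 (deriv v) := hv.deriv'
  have hsq : ∀ f : ℝ → ℝ, 0 ≤ ∫ x in (0:ℝ)..1, f x ^ 2 := fun f =>
    integral_nonneg zero_le_one fun _ _ => sq_nonneg _
  have hsub : ∀ n : ℕ, 0 < n → ∫ x in (0:ℝ)..1, deriv (deriv v) x ^ 2
      ≤ 648 * n ^ 2 * (∫ x in (0:ℝ)..1, deriv v x ^ 2)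
        + 2 / n ^ 2 * ∫ x in (0:ℝ)..1, deriv (deriv (deriv v)) x ^ 2 := fun n hn => by
    have h := integral_deriv_sq_le_of_subdivision hv' (a := 0) (d := 1 / n) (by positivity) n
    rwa [zero_add, mul_one_div_cancel (by positivity), one_div_pow, div_div_eq_mul_div, div_one,
      mul_one_div] at h
  simp only [sq_abs, (by decide : Even 4).pow_abs, iteratedDeriv_succ, iteratedDeriv_zero]
  refine rpow_quarter_le_of_pow_twelve_le (integral_nonneg zero_le_one fun _ _ => by positivity)
    (hsq v) (hsq _) (by positivity) ?_
  exact pow_twelve_le_of_interpolation (hsq v) (hsq _) (hsq _)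
    (sq_integral_deriv_pow_four_le hv₂ zero_le_one hv₀ hv₁)
    (sq_integral_deriv_sq_le hv₂ zero_le_one hv₀ hv₁) hsub
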